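/- Assume: Ψ(r,R) = ψ₃₀r³ + ψ₂₁r²R + ψ₁₂rR² + ψ₀₃R³ + o((|r|+|R|)³) and ∂Ψ/∂r(r,R) = 3ψ₃₀r² + 2ψ₂₁rR + ψ₁₂R² + o((|r|+|R|)²) as (r,R)→(0,0), with ψ₃₀ > 0; Y(r,R) = 1 + y₂₀r² + y₁₁rR + y₀₂R² + o((|r|+|R|)²); Q(r) = q₀r³ + o(r³) and Q'(r) = 3q₀r² + o(r²) as r→0⁺, with q₀ ≠ 0. Define Ψ₁ := Ψ − Q²/(2R), Y₁ := (1 − QQ'/(R·∂Ψ/∂r))·Y, and u₁² := 2Ψ₁/R − 1 + Y₁². Then for every k > 0, lim_{r→0⁺} (kr²)·u₁²(r,kr²)/r³ = 2(ψ₃₀² − q₀²)/ψ₃₀. -/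

import Mathlib

open Filter Topology Asymptotics

/-- The charged velocity function
`u₁²(r,R) = 2Ψ₁/R − 1 + Y₁²`, with `Ψ₁ = Ψ − Q²/(2R)` and
`Y₁ = (1 − QQ'/(R·∂Ψ/∂r))·Y`. -/
noncomputable def u1sq (Ψ Ψr Y : ℝ → ℝ → ℝ) (Q Q' : ℝ → ℝ) (r R : ℝ) : ℝ :=
  2 * (Ψ r R - Q r ^ 2 / (2 * R)) / R - 1
    + ((1 - Q r * Q' r / (R * Ψr r R)) * Y r R) ^ 2

/-!
Along `R = k r²` every ingredient of `u₁²`, divided by the power of `r` matching its order, has a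
limit: `Ψ/r³ → ψ₃₀`, `∂Ψ/∂r / r² → 3ψ₃₀`, `(Y − 1)/r² → y₂₀`, `Q/r³ → q₀`, `Q'/r² → 3q₀`, since the
error terms `o((|r| + |R|)ⁿ)` become `o(rⁿ)` on the parabola. Rewritten in these quotients,
`R·u₁²/r³` is a rational expression that is continuous at the limit point, where only
`2Ψ/r³ → 2ψ₃₀` and the cross term `−2QQ'/(r³ ∂Ψ/∂r) → −2q₀²/ψ₃₀` survive.
-/

theorem tendsto_parabola_nhds_origin (k : ℝ) :
    Tendsto (fun r : ℝ => (r, k * r ^ 2)) (𝓝 0) (𝓝 (0, 0)) := by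
  have : Continuous fun r : ℝ => (r, k * r ^ 2) := by fun_prop
  simpa using this.tendsto 0

theorem isBigO_parabola_norm_pow (k : ℝ) (n : ℕ) :
    (fun r : ℝ => (|r| + |k * r ^ 2|) ^ n) =O[𝓝 0] fun r => r ^ n := by
  refine IsBigO.pow ?_ n
  have hsq : (fun r : ℝ => k * r ^ 2) =O[𝓝 0] fun r => r :=
    ((isLittleO_pow_id one_lt_two).isBigO).const_mul_left k
  exact (isBigO_abs_left.2 (isBigO_refl _ _)).add (isBigO_abs_left.2 hsq)

theorem Asymptotics.IsLittleO.comp_parabola {g : ℝ × ℝ → ℝ} {n : ℕ} (k : ℝ)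
    (h : g =o[𝓝 (0, 0)] fun q : ℝ × ℝ => (|q.1| + |q.2|) ^ n) :
    (fun r => g (r, k * r ^ 2)) =o[𝓝 0] fun r => r ^ n :=
  (h.comp_tendsto (tendsto_parabola_nhds_origin k)).trans_isBigO
    (isBigO_parabola_norm_pow k n)

theorem tendsto_div_pow_parabola {g P : ℝ × ℝ → ℝ} {s : ℝ → ℝ} {n : ℕ} {k c : ℝ}
    (h : (fun q => g q - P q) =o[𝓝 (0, 0)] fun q : ℝ × ℝ => (|q.1| + |q.2|) ^ n)
    (hP : ∀ r, P (r, k * r ^ 2) = r ^ n * (c + r * s r)) (hs : ContinuousAt s 0) :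
    Tendsto (fun r => g (r, k * r ^ 2) / r ^ n) (𝓝[≠] 0) (𝓝 c) := by
  have hrem : Tendsto (fun r => c + r * s r) (𝓝 0) (𝓝 c) := by
    have : ContinuousAt (fun r => c + r * s r) 0 := by fun_prop
    simpa using this.tendsto
  have hsum := ((h.comp_parabola k).tendsto_div_nhds_zero.add hrem).mono_left
    (nhdsWithin_le_nhds (s := {0}ᶜ))
  rw [zero_add] at hsum
  refine hsum.congr' ?_
  filter_upwards [self_mem_nhdsWithin] with r (hr : r ≠ 0)
  rw [hP]
  field_simp
  ring

theorem tendsto_div_of_isLittleO_sub {α : Type*} {l : Filter α} {f g : α → ℝ} {c : ℝ}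
    (h : (fun x => f x - c * g x) =o[l] g) (hg : ∀ᶠ x in l, g x ≠ 0) :
    Tendsto (fun x => f x / g x) l (𝓝 c) := by
  have hsum := h.tendsto_div_nhds_zero.add_const c
  rw [zero_add] at hsum
  refine hsum.congr' ?_
  filter_upwards [hg] with x hx
  field_simp
  ring

/-- `k r² u₁²(r, k r²) / r³` in the variables `a = Ψ/r³`, `b = ∂Ψ/∂r / r²`, `d = (Y − 1)/r²`,
`q = Q/r³`, `q' = Q'/r²`. -/
noncomputable def rescaledU1sq (k r a b d q q' : ℝ) : ℝ :=
  2 * a - q ^ 2 * r / k + k * d * r * (2 + d * r ^ 2)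
    + (1 + d * r ^ 2) ^ 2 * (q ^ 2 * q' ^ 2 * r / b ^ 2 / k - 2 * q * q' / b)

/-- Holds also at `r = 0` and where `∂Ψ/∂r` vanishes, since both sides then take the same
`x / 0 = 0` junk values. -/
theorem u1sq_parabola_eq (Ψ Ψr Y : ℝ → ℝ → ℝ) (Q Q' : ℝ → ℝ) {k : ℝ} (hk : k ≠ 0) (r : ℝ) :
    k * r ^ 2 * u1sq Ψ Ψr Y Q Q' r (k * r ^ 2) / r ^ 3 =
      rescaledU1sq k r (Ψ r (k * r ^ 2) / r ^ 3) (Ψr r (k * r ^ 2) / r ^ 2)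
        ((Y r (k * r ^ 2) - 1) / r ^ 2) (Q r / r ^ 3) (Q' r / r ^ 2) := by
  rcases eq_or_ne r 0 with rfl | hr
  · simp [rescaledU1sq]
  rcases eq_or_ne (Ψr r (k * r ^ 2)) 0 with hb | hb
  · simp only [u1sq, rescaledU1sq, hb]
    field_simp
    ring
  · simp only [u1sq, rescaledU1sq]
    field_simp
    ring

theorem tendsto_rescaledU1sq {α : Type*} {l : Filter α} {r a b d q q' : α → ℝ}
    {k A B D q₀ q₁ : ℝ} (hr : Tendsto r l (𝓝 0)) (ha : Tendsto a l (𝓝 A))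
    (hb : Tendsto b l (𝓝 B)) (hd : Tendsto d l (𝓝 D)) (hq : Tendsto q l (𝓝 q₀))
    (hq' : Tendsto q' l (𝓝 q₁)) (hB : B ≠ 0) :
    Tendsto (fun x => rescaledU1sq k (r x) (a x) (b x) (d x) (q x) (q' x)) l
      (𝓝 (2 * A - 2 * q₀ * q₁ / B)) := by
  have hdr : Tendsto (fun x => d x * r x ^ 2) l (𝓝 0) := by simpa using hd.mul (hr.pow 2)
  have hΨ : Tendsto (fun x => 2 * a x - q x ^ 2 * r x / k) l (𝓝 (2 * A)) := by
    simpa using (ha.const_mul 2).sub (((hq.pow 2).mul hr).div_const k)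
  have hY : Tendsto (fun x => k * d x * r x * (2 + d x * r x ^ 2)) l (𝓝 0) := by
    simpa using ((hd.const_mul k).mul hr).mul (hdr.const_add 2)
  have hQ : Tendsto (fun x => (1 + d x * r x ^ 2) ^ 2 *
      (q x ^ 2 * q' x ^ 2 * r x / b x ^ 2 / k - 2 * q x * q' x / b x)) l
      (𝓝 (-(2 * q₀ * q₁ / B))) := by
    simpa using ((hdr.const_add 1).pow 2).mul
      (((((hq.pow 2).mul (hq'.pow 2)).mul hr).div (hb.pow 2) (pow_ne_zero 2 hB)).div_const k
        |>.sub (((hq.const_mul 2).mul hq').div hb hB))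
  simpa [rescaledU1sq, ← sub_eq_add_neg] using (hΨ.add hY).add hQ

theorem curve_kr2_limit_u1sq_general
    (Ψ Ψr Y : ℝ → ℝ → ℝ) (Q Q' : ℝ → ℝ)
    (ψ30 ψ21 ψ12 ψ03 y20 y11 y02 q0 : ℝ)
    (hψ30 : 0 < ψ30)
    (hΨ : (fun q : ℝ × ℝ =>
        Ψ q.1 q.2 - (ψ30*q.1^3 + ψ21*q.1^2*q.2 + ψ12*q.1*q.2^2 + ψ03*q.2^3))
      =o[nhds ((0:ℝ), (0:ℝ))] fun q : ℝ × ℝ => (|q.1| + |q.2|)^3)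
    (hΨr : (fun q : ℝ × ℝ =>
        Ψr q.1 q.2 - (3*ψ30*q.1^2 + 2*ψ21*q.1*q.2 + ψ12*q.2^2))
      =o[nhds ((0:ℝ), (0:ℝ))] fun q : ℝ × ℝ => (|q.1| + |q.2|)^2)
    (hY : (fun q : ℝ × ℝ =>
        Y q.1 q.2 - (1 + y20*q.1^2 + y11*q.1*q.2 + y02*q.2^2))
      =o[nhds ((0:ℝ), (0:ℝ))] fun q : ℝ × ℝ => (|q.1| + |q.2|)^2)
    (hQ : (fun r : ℝ => Q r - q0 * r^3) =o[𝓝[>] (0:ℝ)] fun r : ℝ => r^3)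
    (hQ' : (fun r : ℝ => Q' r - 3 * q0 * r^2) =o[𝓝[>] (0:ℝ)] fun r : ℝ => r^2) :
    ∀ k : ℝ, 0 < k →
      Tendsto (fun r : ℝ => (k*r^2) * u1sq Ψ Ψr Y Q Q' r (k*r^2) / r^3)
        (𝓝[>] (0:ℝ)) (𝓝 (2 * (ψ30^2 - q0^2) / ψ30)) := by
  intro k hk
  have hr : Tendsto (fun r : ℝ => r) (𝓝[>] 0) (𝓝 0) := tendsto_id.mono_left nhdsWithin_le_nhds
  have ha := (tendsto_div_pow_parabola (k := k) (c := ψ30) (g := fun q => Ψ q.1 q.2)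
    (s := fun r => ψ21 * k + ψ12 * k ^ 2 * r + ψ03 * k ^ 3 * r ^ 2) hΨ (fun r => by ring)
    (by fun_prop)).mono_left (nhdsGT_le_nhdsNE 0)
  have hb := (tendsto_div_pow_parabola (k := k) (c := 3 * ψ30) (g := fun q => Ψr q.1 q.2)
    (s := fun r => 2 * ψ21 * k + ψ12 * k ^ 2 * r) hΨr (fun r => by ring)
    (by fun_prop)).mono_left (nhdsGT_le_nhdsNE 0)
  have hd := (tendsto_div_pow_parabola (k := k) (c := y20) (g := fun q => Y q.1 q.2 - 1)
    (P := fun q => y20 * q.1 ^ 2 + y11 * q.1 * q.2 + y02 * q.2 ^ 2)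
    (s := fun r => y11 * k + y02 * k ^ 2 * r) (hY.congr_left fun q => by ring)
    (fun r => by ring) (by fun_prop)).mono_left (nhdsGT_le_nhdsNE 0)
  have hr0 : ∀ n : ℕ, ∀ᶠ r : ℝ in 𝓝[>] 0, r ^ n ≠ 0 := fun n =>
    eventually_mem_nhdsWithin.mono fun r (hr : 0 < r) => pow_ne_zero n hr.ne'
  have hq := tendsto_div_of_isLittleO_sub hQ (hr0 3)
  have hq' := tendsto_div_of_isLittleO_sub hQ' (hr0 2)
  have hlim := tendsto_rescaledU1sq (k := k) hr ha hb hd hq hq' (by positivity)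
  simp only [u1sq_parabola_eq Ψ Ψr Y Q Q' hk.ne']
  convert hlim using 2
  field_simp

/-- Behavior of `R·u₁²` along the curves `R = k r²` (case `p = 1`):
`(kr²)·u₁²(r,kr²) = (2(ψ₃₀² − q₀²)/ψ₃₀)·r³ + o(r³)`. -/
theorem curve_kr2_limit_u1sq
    (Ψ Ψr Y : ℝ → ℝ → ℝ) (Q Q' : ℝ → ℝ)
    (ψ30 ψ21 ψ12 ψ03 y20 y11 y02 q0 : ℝ)
    (hψ30 : 0 < ψ30) (hq0 : q0 ≠ 0)
    (hlink : ∀ r R, HasDerivAt (fun s => Ψ s R) (Ψr r R) r)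
    (hQd : ∀ r, HasDerivAt Q (Q' r) r)
    (hΨ : (fun q : ℝ × ℝ =>
        Ψ q.1 q.2 - (ψ30*q.1^3 + ψ21*q.1^2*q.2 + ψ12*q.1*q.2^2 + ψ03*q.2^3))
      =o[nhds ((0:ℝ), (0:ℝ))] fun q : ℝ × ℝ => (|q.1| + |q.2|)^3)
    (hΨr : (fun q : ℝ × ℝ =>
        Ψr q.1 q.2 - (3*ψ30*q.1^2 + 2*ψ21*q.1*q.2 + ψ12*q.2^2))
      =o[nhds ((0:ℝ), (0:ℝ))] fun q : ℝ × ℝ => (|q.1| + |q.2|)^2)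
    (hY : (fun q : ℝ × ℝ =>
        Y q.1 q.2 - (1 + y20*q.1^2 + y11*q.1*q.2 + y02*q.2^2))
      =o[nhds ((0:ℝ), (0:ℝ))] fun q : ℝ × ℝ => (|q.1| + |q.2|)^2)
    (hQ : (fun r : ℝ => Q r - q0 * r^3) =o[𝓝[>] (0:ℝ)] fun r : ℝ => r^3)
    (hQ' : (fun r : ℝ => Q' r - 3 * q0 * r^2) =o[𝓝[>] (0:ℝ)] fun r : ℝ => r^2) :
    ∀ k : ℝ, 0 < k →
      Tendsto (fun r : ℝ => (k*r^2) * u1sq Ψ Ψr Y Q Q' r (k*r^2) / r^3)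
        (𝓝[>] (0:ℝ)) (𝓝 (2 * (ψ30^2 - q0^2) / ψ30)) :=
  curve_kr2_limit_u1sq_general Ψ Ψr Y Q Q' ψ30 ψ21 ψ12 ψ03 y20 y11 y02 q0 hψ30 hΨ hΨr hY hQ hQ'
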